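/- Let f₁,...,f_N : H → ℝ ∪ {+∞} be proper lsc convex with Σ_{i<j}⟨x_i,x_j⟩ ≤ Σ_i f_i(x_i) for all x ∈ H^N. If x = (x₁,...,x_N) attains equality and s = Σ x_i, then Σ_{i=1}^N e_{f_i^*}(s) = ½‖s‖² and x_i = prox_{f_i}(s) for each i. -/

import Mathlib

open scoped RealInnerProductSpace BigOperators

noncomputable section

variable {H : Type*} [NormedAddCommGroup H] [InnerProductSpace ℝ H] [CompleteSpace H]

/-- The multi-marginal cost `c(x₁,...,x_N) = ∑_{i<j} ⟪x_i, x_j⟫`. -/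
def cost {N : ℕ} (x : Fin N → H) : ℝ :=
  ∑ i : Fin N, ∑ j : Fin N, if i < j then ⟪x i, x j⟫ else 0

/-- `q(x) = ½‖x‖²`. -/
def q (x : H) : ℝ := (1 / 2) * ‖x‖ ^ 2

/-- Convexity for extended-real-valued functions. -/
def EConvex (f : H → EReal) : Prop :=
  ∀ x y : H, ∀ a b : ℝ, 0 ≤ a → 0 ≤ b → a + b = 1 →
    f (a • x + b • y) ≤ (a : EReal) * f x + (b : EReal) * f y

/-- The Fenchel conjugate `f*(u) = sup_x (⟪u,x⟫ - f(x))`. -/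
def econj (f : H → EReal) (u : H) : EReal :=
  ⨆ x : H, ((⟪u, x⟫ : ℝ) : EReal) - f x

/-- The Moreau envelope `e_f(s) = inf_x (f(x) + q(s - x))`. -/
def env (f : H → EReal) (s : H) : EReal :=
  ⨅ x : H, f x + ((q (s - x) : ℝ) : EReal)

/-! Replacing the `i`-th entry of `x` by `y` changes the cost by exactly `⟪s - xᵢ, y - xᵢ⟫`, so the
splitting inequality at the modified point, minus the equality at `x`, says `s - xᵢ ∈ ∂fᵢ(xᵢ)`.
This subgradient makes `xᵢ` the proximal point of `fᵢ` at `s` and gives equality in Fenchel–Young at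
`(xᵢ, s - xᵢ)`, whence `e_{fᵢ*}(s) = ⟪s, xᵢ⟫ - q(xᵢ) - fᵢ(xᵢ)`; summing over `i` with
`q(s) = c(x) + ∑ᵢ q(xᵢ)` gives `q(s)`. -/

@[simp, norm_cast]
lemma EReal.coe_finset_sum {ι : Type*} (s : Finset ι) (g : ι → ℝ) :
    ((∑ i ∈ s, g i : ℝ) : EReal) = ∑ i ∈ s, (g i : EReal) :=
  map_sum (⟨⟨Real.toEReal, EReal.coe_zero⟩, EReal.coe_add⟩ : ℝ →+ EReal) g s

lemma EReal.exists_coe_of_sum_eq_coe {ι : Type*} [Fintype ι] {a : ι → EReal}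
    (hbot : ∀ i, a i ≠ ⊥) {c : ℝ} (hsum : ∑ i, a i = c) :
    ∃ r : ι → ℝ, (∀ i, a i = r i) ∧ c = ∑ i, r i := by
  classical
  have htop : ∀ i, a i ≠ ⊤ := by
    intro i hi
    have hrest : ∑ j ∈ Finset.univ.erase i, a j ≠ ⊥ :=
      Finset.sum_induction _ (· ≠ ⊥) (fun _ _ ha hb => EReal.add_ne_bot_iff.2 ⟨ha, hb⟩)
        EReal.zero_ne_bot fun j _ => hbot j
    rw [← Finset.add_sum_erase _ _ (Finset.mem_univ i), hi, EReal.top_add_of_ne_bot hrest] at hsum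
    exact EReal.coe_ne_top c hsum.symm
  have hcoe : ∀ i, a i = (a i).toReal := fun i => (EReal.coe_toReal (htop i) (hbot i)).symm
  refine ⟨fun i => (a i).toReal, hcoe, ?_⟩
  rw [Finset.sum_congr rfl fun i _ => hcoe i] at hsum
  exact_mod_cast hsum.symm

lemma Finset.sum_sum_eq_two_mul_sum_sum_lt_add_sum_diag {ι : Type*} [Fintype ι] [LinearOrder ι]
    (g : ι → ι → ℝ) (hg : ∀ i j, g i j = g j i) :
    ∑ i, ∑ j, g i j = 2 * ∑ i, ∑ j, (if i < j then g i j else 0) + ∑ i, g i i := by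
  have hsplit : ∀ i j, g i j = (if i < j then g i j else 0) + (if j < i then g j i else 0)
      + (if i = j then g i j else 0) := by
    intro i j
    rcases lt_trichotomy i j with h | rfl | h
    · simp [h, h.ne, h.not_gt]
    · simp
    · simp [h, h.ne', h.not_gt, hg i j]
  calc ∑ i, ∑ j, g i j
      = ∑ i, ∑ j, (if i < j then g i j else 0) + ∑ i, ∑ j, (if j < i then g j i else 0)
        + ∑ i, ∑ j, (if i = j then g i j else 0) := by
        simp only [← Finset.sum_add_distrib, ← hsplit]
    _ = _ := by
        rw [Finset.sum_comm (f := fun i j => if j < i then g j i else 0)]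
        simp only [Finset.sum_ite_eq, Finset.mem_univ, if_true]
        ring

lemma q_nonneg {E : Type*} [NormedAddCommGroup E] (a : E) : 0 ≤ q a := by
  unfold q; positivity

section

variable {E : Type*} [NormedAddCommGroup E] [InnerProductSpace ℝ E]

lemma q_add (a b : E) : q (a + b) = q a + ⟪a, b⟫ + q b := by
  simp only [q, norm_add_sq_real]; ring

lemma q_sub (a b : E) : q (a - b) = q a - ⟪a, b⟫ + q b := by
  simp only [q, norm_sub_sq_real]; ring

lemma cost_eq_q_sum_sub_sum_q {N : ℕ} (x : Fin N → E) :
    cost x = q (∑ j, x j) - ∑ j, q (x j) := by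
  have hsq : ‖∑ j, x j‖ ^ 2 = ∑ i, ∑ j, ⟪x i, x j⟫ := by
    rw [← real_inner_self_eq_norm_sq, sum_inner]
    simp only [inner_sum]
  have := Finset.sum_sum_eq_two_mul_sum_sum_lt_add_sum_diag (fun i j => ⟪x i, x j⟫)
    fun i j => real_inner_comm _ _
  simp only [real_inner_self_eq_norm_sq] at this
  simp only [q, cost, ← Finset.mul_sum]
  linarith

lemma cost_update {N : ℕ} (x : Fin N → E) (i : Fin N) (y : E) :
    cost (Function.update x i y) = cost x + ⟪(∑ j, x j) - x i, y - x i⟫ := by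
  have hi := Finset.mem_univ i
  set A := ∑ j ∈ Finset.univ \ {i}, x j
  have hx : ∑ j, x j = x i + A := Finset.sum_eq_add_sum_sdiff_singleton_of_mem hi x
  have hy : ∑ j, Function.update x i y j = y + A := Finset.sum_update_of_mem hi x y
  have hqx : ∑ j, q (x j) = q (x i) + ∑ j ∈ Finset.univ \ {i}, q (x j) :=
    Finset.sum_eq_add_sum_sdiff_singleton_of_mem hi _
  have hqy : ∑ j, q (Function.update x i y j) = q y + ∑ j ∈ Finset.univ \ {i}, q (x j) := by
    rw [← Finset.sum_update_of_mem hi]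
    exact Finset.sum_congr rfl fun j _ => Function.apply_update (fun _ => q) x i y j
  rw [cost_eq_q_sum_sub_sum_q, cost_eq_q_sum_sub_sum_q, hx, hy, hqx, hqy, add_sub_cancel_left,
    q_add, q_add, inner_sub_right, real_inner_comm A y, real_inner_comm A (x i)]
  ring

lemma subgradient_of_cost_eq_sum {N : ℕ} {f : Fin N → E → EReal}
    (hineq : ∀ x : Fin N → E, ((cost x : ℝ) : EReal) ≤ ∑ i, f i (x i))
    {x : Fin N → E} {r : Fin N → ℝ} (hr : ∀ i, f i (x i) = r i) (hx : cost x = ∑ i, r i)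
    (i : Fin N) (y : E) :
    ((r i + ⟪(∑ j, x j) - x i, y - x i⟫ : ℝ) : EReal) ≤ f i y := by
  have hi := Finset.mem_univ i
  have hrest : ∑ j ∈ Finset.univ \ {i}, f j (x j) = ((cost x - r i : ℝ) : EReal) := by
    rw [hx, Finset.sum_eq_add_sum_sdiff_singleton_of_mem hi, add_sub_cancel_left,
      EReal.coe_finset_sum]
    exact Finset.sum_congr rfl fun j _ => hr j
  have hupd : ∑ j, f j (Function.update x i y j) = f i y + ((cost x - r i : ℝ) : EReal) := by
    rw [← hrest, ← Finset.sum_update_of_mem hi]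
    exact Finset.sum_congr rfl fun j _ => Function.apply_update f x i y j
  have h := hineq (Function.update x i y)
  rw [cost_update, hupd] at h
  rw [← (EReal.addLECancellable_coe (cost x - r i)).add_le_add_iff_right]
  convert h using 1
  rw [← EReal.coe_add]
  congr 1
  ring

variable {f : E → EReal} {x : E} {r : ℝ}

lemma coe_inner_sub_le_econj (hfx : f x = r) (u : E) :
    ((⟪u, x⟫ - r : ℝ) : EReal) ≤ econj f u := by
  have h := le_iSup (fun z => ((⟪u, z⟫ : ℝ) : EReal) - f z) x
  rwa [hfx, ← EReal.coe_sub] at h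

lemma econj_eq_of_subgradient {u : E} (hfx : f x = r)
    (hsub : ∀ y, ((r + ⟪u, y - x⟫ : ℝ) : EReal) ≤ f y) :
    econj f u = ((⟪u, x⟫ - r : ℝ) : EReal) := by
  refine le_antisymm (iSup_le fun y => ?_) (coe_inner_sub_le_econj hfx u)
  calc ((⟪u, y⟫ : ℝ) : EReal) - f y
      ≤ ((⟪u, y⟫ : ℝ) : EReal) - ((r + ⟪u, y - x⟫ : ℝ) : EReal) :=
        EReal.sub_le_sub le_rfl (hsub y)
    _ = ((⟪u, x⟫ - r : ℝ) : EReal) := by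
        rw [← EReal.coe_sub, inner_sub_right]
        congr 1
        ring

variable {s : E}

lemma env_econj_eq_of_subgradient (hfx : f x = r)
    (hsub : ∀ y, ((r + ⟪s - x, y - x⟫ : ℝ) : EReal) ≤ f y) :
    env (econj f) s = ((⟪s, x⟫ - q x - r : ℝ) : EReal) := by
  refine le_antisymm ((iInf_le _ (s - x)).trans_eq ?_) (le_iInf fun u => ?_)
  · rw [econj_eq_of_subgradient hfx hsub, sub_sub_cancel, ← EReal.coe_add, inner_sub_left,
      real_inner_self_eq_norm_sq, q]
    congr 1
    ring
  · have hq : q (s - u - x) = q (s - u) - (⟪s, x⟫ - ⟪u, x⟫) + q x := by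
      rw [q_sub, inner_sub_left]
    calc ((⟪s, x⟫ - q x - r : ℝ) : EReal)
        ≤ ((⟪u, x⟫ - r : ℝ) : EReal) + ((q (s - u) : ℝ) : EReal) := by
          rw [← EReal.coe_add, EReal.coe_le_coe_iff]
          linarith [q_nonneg (s - u - x)]
      _ ≤ econj f u + ((q (s - u) : ℝ) : EReal) := by
          gcongr
          exact coe_inner_sub_le_econj hfx u

lemma add_q_sub_le_of_subgradient (hfx : f x = r)
    (hsub : ∀ y, ((r + ⟪s - x, y - x⟫ : ℝ) : EReal) ≤ f y) (y : E) :
    f x + ((q (s - x) : ℝ) : EReal) ≤ f y + ((q (s - y) : ℝ) : EReal) := by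
  have hq : q (s - y) = q (s - x) - ⟪s - x, y - x⟫ + q (y - x) := by
    rw [← q_sub, sub_sub_sub_cancel_right]
  calc f x + ((q (s - x) : ℝ) : EReal)
      ≤ ((r + ⟪s - x, y - x⟫ : ℝ) : EReal) + ((q (s - y) : ℝ) : EReal) := by
        rw [hfx, ← EReal.coe_add, ← EReal.coe_add, EReal.coe_le_coe_iff]
        linarith [q_nonneg (y - x)]
    _ ≤ f y + ((q (s - y) : ℝ) : EReal) := by
        gcongr
        exact hsub y

end

theorem splitting_point_gives_envelope_equality_general {N : ℕ}
    (f : Fin N → H → EReal)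
    (hproper : ∀ i, (∃ x, f i x ≠ ⊤) ∧ ∀ x, f i x ≠ ⊥)
    (hineq : ∀ x : Fin N → H, ((cost x : ℝ) : EReal) ≤ ∑ i, f i (x i))
    (x : Fin N → H) (hx : ((cost x : ℝ) : EReal) = ∑ i, f i (x i)) :
    (∑ i, env (econj (f i)) (∑ j, x j) = ((q (∑ j, x j) : ℝ) : EReal)) ∧
    (∀ i, ∀ y : H,
      f i (x i) + ((q ((∑ j, x j) - x i) : ℝ) : EReal)
        ≤ f i y + ((q ((∑ j, x j) - y) : ℝ) : EReal)) := by
  obtain ⟨r, hr, hxr⟩ := EReal.exists_coe_of_sum_eq_coe (fun i => (hproper i).2 (x i)) hx.symm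
  have hsub := subgradient_of_cost_eq_sum hineq hr hxr
  refine ⟨?_, fun i => add_q_sub_le_of_subgradient (hr i) (hsub i)⟩
  have hsum_inner : ∑ i, ⟪∑ j, x j, x i⟫ = 2 * q (∑ j, x j) := by
    rw [← inner_sum, real_inner_self_eq_norm_sq, q]
    ring
  rw [Finset.sum_congr rfl fun i _ => env_econj_eq_of_subgradient (hr i) (hsub i),
    ← EReal.coe_finset_sum, Finset.sum_sub_distrib, Finset.sum_sub_distrib, hsum_inner, ← hxr,
    cost_eq_q_sum_sub_sum_q]
  congr 1
  ring

/-- If `x` attains equality in the `c`-splitting inequality and `s = ∑ᵢ xᵢ`, then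
`∑ᵢ e_{fᵢ*}(s) = q(s)` and each `xᵢ` is the proximal point `prox_{fᵢ}(s)`. -/
theorem splitting_point_gives_envelope_equality {N : ℕ} (hN : 2 ≤ N)
    (f : Fin N → H → EReal)
    (hproper : ∀ i, (∃ x, f i x ≠ ⊤) ∧ ∀ x, f i x ≠ ⊥)
    (hlsc : ∀ i, LowerSemicontinuous (f i))
    (hconv : ∀ i, EConvex (f i))
    (hineq : ∀ x : Fin N → H, ((cost x : ℝ) : EReal) ≤ ∑ i, f i (x i))
    (x : Fin N → H) (hx : ((cost x : ℝ) : EReal) = ∑ i, f i (x i)) :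
    (∑ i, env (econj (f i)) (∑ j, x j) = ((q (∑ j, x j) : ℝ) : EReal)) ∧
    (∀ i, ∀ y : H,
      f i (x i) + ((q ((∑ j, x j) - x i) : ℝ) : EReal)
        ≤ f i y + ((q ((∑ j, x j) - y) : ℝ) : EReal)) :=
  splitting_point_gives_envelope_equality_general f hproper hineq x hx
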